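/- In the Leibniz algebra 𝔏₉ (products e₁e₃ = e₂, e₂e₃ = e₂, e₃e₃ = e₁), for t ≠ 0 the vectors E₁ᵗ = t²e₁, E₂ᵗ = t³e₂, E₃ᵗ = t·e₃ form a basis whose structure constants are polynomial in t and specialize at t = 0 to those of 𝔏₈ (products e₁e₃ = e₂, e₃e₃ = e₁). -/
import Mathlib


/-- Multiplication of `𝔏₉` on ℂ³ (basis `e₁,e₂,e₃` = indices `0,1,2`):
`e₁e₃ = e₂`, `e₂e₃ = e₂`, `e₃e₃ = e₁`, other basis products zero. -/
def mulL9 (x y : Fin 3 → ℂ) : Fin 3 → ℂ :=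
  ![x 2 * y 2, x 0 * y 2 + x 1 * y 2, 0]

/-- Multiplication of `𝔏₈` on ℂ³: `e₁e₃ = e₂`, `e₃e₃ = e₁`, other basis
products zero. -/
def mulL8 (x y : Fin 3 → ℂ) : Fin 3 → ℂ := ![x 2 * y 2, x 0 * y 2, 0]

/-- The parametrized basis `E₁ᵗ = t²e₁`, `E₂ᵗ = t³e₂`, `E₃ᵗ = t·e₃`. -/
def E18 (t : ℂ) : Fin 3 → Fin 3 → ℂ :=
  ![![t ^ 2, 0, 0], ![0, t ^ 3, 0], ![0, 0, t]]

/-- Structure constants. -/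
noncomputable def c18 : Fin 3 → Fin 3 → Fin 3 → Polynomial ℂ := fun i j k =>
  if j = 2 then
    if i = 0 ∧ k = 1 then 1
    else if i = 1 ∧ k = 1 then Polynomial.X
    else if i = 2 ∧ k = 0 then 1
    else 0
  else 0

/-- `𝔏₉` degenerates to `𝔏₈`: for `t ≠ 0` the `Eᵢᵗ` form a basis in which the
structure constants of `𝔏₉` are polynomials in `t` specializing at `t = 0` to
those of `𝔏₈`. -/
theorem stmt_18 : ∃ c : Fin 3 → Fin 3 → Fin 3 → Polynomial ℂ,
    (∀ t : ℂ, t ≠ 0 → LinearIndependent ℂ (E18 t) ∧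
      ∀ i j, mulL9 (E18 t i) (E18 t j) = ∑ k, (c i j k).eval t • E18 t k) ∧
    (∀ i j, mulL8 (Pi.single i 1) (Pi.single j 1)
      = ∑ k, (c i j k).eval 0 • (Pi.single k 1 : Fin 3 → ℂ)) := by
  refine ⟨c18, ?_, ?_⟩
  · intro t ht
    constructor
    · rw [Fintype.linearIndependent_iff]
      intro g hg i
      have h0 := congrFun hg 0
      have h1 := congrFun hg 1
      have h2 := congrFun hg 2
      simp [E18, Fin.sum_univ_three, mul_eq_zero, ht, pow_eq_zero_iff, Matrix.vecHead, Matrix.vecTail] at h0 h1 h2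
      fin_cases i <;> simpa using ‹_›
    · intro i j
      fin_cases i <;> fin_cases j <;>
        · funext k
          fin_cases k <;>
            simp [E18, mulL9, c18, Fin.sum_univ_three, Matrix.vecHead, Matrix.vecTail] <;> ring
  · intro i j
    fin_cases i <;> fin_cases j <;>
      · funext k
        fin_cases k <;> simp [mulL8, c18, Fin.sum_univ_three, Pi.single_apply]
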